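/- In F_7 with evaluation points x_1 = 2, x_2 = 3, x_3 = 1, x_4 = 6, for every quadratic polynomial p(x) = s_1 + s_2 x + r x^2 over F_7, one has s_2 = 4·p(1) − 4·p(6). In particular, the coefficient s_2 is a function of the evaluations at 1 and 6 only, independent of s_1 and r. -/
import Mathlib


/-- In F_7, for every quadratic p(x) = s₁ + s₂x + rx², one has
s₂ = 4·p(1) − 4·p(6); in particular s₂ is determined by p(1) and p(6). -/
theorem leak_second_symbol (s₁ s₂ r : ZMod 7) :
    s₂ = 4 * (s₁ + s₂ * 1 + r * 1 ^ 2) - 4 * (s₁ + s₂ * 6 + r * 6 ^ 2) := by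
  have h : (7 : ZMod 7) = 0 := by decide
  linear_combination (3 * s₂ + 20 * r) * h
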